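/- Let ν be a μ-stationary probability measure on a G-space X and ξ a non-singular σ-finite measure on X with ν ≪ ξ. Define the information functions I_ν(g,x) = log(dg⁻¹ν/dν)(x) and I_ξ(g,x) = log(dg⁻¹ξ/dξ)(x). If both I_ν and I_ξ lie in L¹(G × X, μ ⊗ ν), then ∫_G ∫_X I_ν dν dμ = ∫_G ∫_X I_ξ dν dμ. -/

import Mathlib

/-!
Write `u = dν/dξ`. Since `g⁻¹ν = g⁻¹(u ξ) = (u ∘ g) · g⁻¹ξ`, the chain rule for Radon–Nikodym
derivatives gives `I_ν(g,x) - I_ξ(g,x) = log u(gx) - log u(x)` for `ν`-a.e. `x`, as soon as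
`u ∘ g` does not vanish `ν`-a.e., which stationarity guarantees for `μ`-a.e. `g`. The right-hand
side is a coboundary `φ(gx) - φ(x)`. Stationarity says that `(g,x) ↦ gx` and `(g,x) ↦ x` push
`μ ⊗ ν` to the same measure `ν`, so an integrable coboundary has integral zero: this is clear for
bounded `φ`, and follows in general by truncating `φ` and dominated convergence.
-/

open MeasureTheory

/-- The support of a measure on a topological space. -/
def measureSupport {G : Type*} [TopologicalSpace G] [MeasurableSpace G]
    (μ : Measure G) : Set G :=
  {g | ∀ U : Set G, IsOpen U → g ∈ U → 0 < μ U}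

/-- Convolution powers of a measure on a group. -/
noncomputable def convPow {G : Type*} [Monoid G] [MeasurableSpace G]
    (μ : Measure G) : ℕ → Measure G
  | 0 => Measure.dirac 1
  | n + 1 => (convPow μ n).mconv μ

/-- Admissibility: the semigroup generated by the support is dense and some convolution
power is absolutely continuous with respect to the Haar measure. -/
def Admissible {G : Type*} [Group G] [TopologicalSpace G] [IsTopologicalGroup G]
    [LocallyCompactSpace G] [MeasurableSpace G] [BorelSpace G] (μ : Measure G) : Prop :=
  Dense (Submonoid.closure (measureSupport μ) : Set G) ∧
    ∃ n : ℕ, 0 < n ∧ convPow μ n ≪ (Measure.haar : Measure G)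

/-- The information function `I_ξ(g,x) = log (d g⁻¹ξ / dξ)(x)` of a measure `ξ` on a
`G`-space. -/
noncomputable def infoFun {G : Type*} [Group G] {X : Type*} [MeasurableSpace X]
    [MulAction G X] (ξ : Measure X) (g : G) (x : X) : ℝ :=
  Real.log (((Measure.map (g⁻¹ • ·) ξ).rnDeriv ξ x).toReal)

open Filter
open scoped ENNReal

def truncate (n : ℕ) (a : ℝ) : ℝ := max (min a n) (-n)

lemma abs_truncate_le (n : ℕ) (a : ℝ) : |truncate n a| ≤ n :=
  abs_le.2 ⟨le_max_right _ _, max_le (min_le_right _ _) (neg_le_self n.cast_nonneg)⟩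

lemma abs_truncate_sub_truncate_le (n : ℕ) (a b : ℝ) :
    |truncate n a - truncate n b| ≤ |a - b| := by
  refine (abs_max_sub_max_le_abs _ _ _).trans ?_
  simpa using abs_min_sub_min_le_max a n b n

lemma measurable_truncate (n : ℕ) : Measurable (truncate n) :=
  (measurable_id.min measurable_const).max measurable_const

lemma tendsto_truncate (a : ℝ) : Tendsto (fun n : ℕ => truncate n a) atTop (nhds a) := by
  refine tendsto_const_nhds.congr' ?_
  filter_upwards [tendsto_natCast_atTop_atTop.eventually_ge_atTop |a|] with n hn
  rw [truncate, min_eq_left ((le_abs_self a).trans hn),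
    max_eq_left (neg_le_of_abs_le hn)]

theorem integral_comp_sub_comp_eq_zero {Ω X : Type*} [MeasurableSpace Ω] [MeasurableSpace X]
    {P : Measure Ω} [IsFiniteMeasure P] {S T : Ω → X} (hS : Measurable S) (hT : Measurable T)
    (hST : P.map S = P.map T) {φ : X → ℝ} (hφ : Measurable φ)
    (hint : Integrable (fun ω => φ (S ω) - φ (T ω)) P) :
    ∫ ω, (φ (S ω) - φ (T ω)) ∂P = 0 := by
  have hmeas (n : ℕ) {R : Ω → X} (hR : Measurable R) :
      Measurable fun ω => truncate n (φ (R ω)) :=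
    (measurable_truncate n).comp (hφ.comp hR)
  have htrunc (n : ℕ) :
      ∫ ω, (truncate n (φ (S ω)) - truncate n (φ (T ω))) ∂P = 0 := by
    have hbdd {R : Ω → X} (hR : Measurable R) : Integrable (fun ω => truncate n (φ (R ω))) P :=
      .of_bound (hmeas n hR).aestronglyMeasurable n (ae_of_all _ fun _ => abs_truncate_le _ _)
    have htruncφ (ρ : Measure X) : AEStronglyMeasurable (fun x => truncate n (φ x)) ρ :=
      ((measurable_truncate n).comp hφ).aestronglyMeasurable
    rw [integral_sub (hbdd hS) (hbdd hT), sub_eq_zero, ← integral_map hS.aemeasurable (htruncφ _),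
      hST, integral_map hT.aemeasurable (htruncφ _)]
  have hlim := tendsto_integral_of_dominated_convergence _
    (fun n => ((hmeas n hS).sub (hmeas n hT)).aestronglyMeasurable) hint.abs
    (fun n => ae_of_all _ fun ω => abs_truncate_sub_truncate_le n _ _)
    (ae_of_all _ fun ω => (tendsto_truncate _).sub (tendsto_truncate _))
  exact tendsto_nhds_unique hlim (tendsto_const_nhds.congr fun n => (htrunc n).symm)

theorem MeasureTheory.Integrable.of_ae_ae_eq_prod {α β E : Type*} [MeasurableSpace α]
    [MeasurableSpace β] [NormedAddCommGroup E] {μ : Measure α} {ν : Measure β} [SFinite μ]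
    [SFinite ν] {f F : α × β → E} (hF : Integrable F (μ.prod ν))
    (hf : AEStronglyMeasurable f (μ.prod ν))
    (hfF : ∀ᵐ a ∂μ, (fun b => f (a, b)) =ᵐ[ν] fun b => F (a, b)) :
    Integrable f (μ.prod ν) := by
  refine (integrable_prod_iff hf).2 ⟨?_, ?_⟩
  · filter_upwards [hfF, hF.prod_right_ae] with a ha hFa using hFa.congr ha.symm
  · refine hF.norm.integral_prod_left.congr ?_
    filter_upwards [hfF] with a ha
    exact integral_congr_ae (ha.fun_comp (‖·‖)).symm

lemma log_toReal_mul_div {a b c : ℝ≥0∞} (ha₀ : a ≠ 0) (ha : a ≠ ∞) (hb₀ : b ≠ 0) (hb : b ≠ ∞)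
    (hc₀ : c ≠ 0) (hc : c ≠ ∞) :
    Real.log (a * b / c).toReal = Real.log a.toReal + Real.log b.toReal - Real.log c.toReal := by
  have := ENNReal.toReal_pos ha₀ ha
  have := ENNReal.toReal_pos hb₀ hb
  have := ENNReal.toReal_pos hc₀ hc
  rw [ENNReal.toReal_div, ENNReal.toReal_mul, Real.log_div, Real.log_mul] <;> positivity

section ChangeOfVariables

variable {X : Type*} [MeasurableSpace X] (e : X ≃ᵐ X) {ν ξ : Measure X}

lemma ae_comp_symm_of_absolutelyContinuous (hac : ν ≪ ξ) (he : ξ ≪ ξ.map e) {p : X → Prop}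
    (hp : ∀ᵐ x ∂ξ, p x) : ∀ᵐ x ∂ν, p (e.symm x) :=
  hac <| he <| e.measurableEmbedding.ae_map_iff.2 (by simpa using hp)

variable [SigmaFinite ν] [SigmaFinite ξ]

theorem rnDeriv_map_ae_eq_mul_div (hac : ν ≪ ξ) (he : ξ.map e ≪ ξ) (he' : ξ ≪ ξ.map e) :
    (ν.map e).rnDeriv ν =ᵐ[ν]
      fun x => ν.rnDeriv ξ (e.symm x) * (ξ.map e).rnDeriv ξ x / ν.rnDeriv ξ x := by
  have := e.sigmaFinite_map (μ := ν)
  have := e.sigmaFinite_map (μ := ξ)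
  have hmap : ν.map e ≪ ξ.map e := hac.map e.measurable
  filter_upwards [Measure.rnDeriv_eq_div (hmap.trans he) hac,
    hac (Measure.rnDeriv_mul_rnDeriv (κ := ξ) hmap),
    ae_comp_symm_of_absolutelyContinuous e hac he' (e.measurableEmbedding.rnDeriv_map ν ξ)]
    with x hdiv hchain hcomp
  rw [hdiv, ← hchain, Pi.mul_apply, ← hcomp, e.apply_symm_apply]

theorem log_rnDeriv_map_ae_eq (hac : ν ≪ ξ) (he : ξ.map e ≪ ξ) (he' : ξ ≪ ξ.map e)
    (hpos : ∀ᵐ x ∂ν, ν.rnDeriv ξ (e.symm x) ≠ 0) :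
    ∀ᵐ x ∂ν, Real.log ((ν.map e).rnDeriv ν x).toReal - Real.log ((ξ.map e).rnDeriv ξ x).toReal =
      Real.log (ν.rnDeriv ξ (e.symm x)).toReal - Real.log (ν.rnDeriv ξ x).toReal := by
  have := e.sigmaFinite_map (μ := ξ)
  filter_upwards [rnDeriv_map_ae_eq_mul_div e hac he he', hpos,
    ae_comp_symm_of_absolutelyContinuous e hac he' (ν.rnDeriv_ne_top ξ),
    hac (he' (Measure.rnDeriv_pos he)), hac ((ξ.map e).rnDeriv_ne_top ξ),
    Measure.rnDeriv_pos hac, hac (ν.rnDeriv_ne_top ξ)] with x hx ha₀ ha hb₀ hb hc₀ hc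
  rw [hx, log_toReal_mul_div ha₀ ha hb₀.ne' hb hc₀.ne' hc]
  ring

end ChangeOfVariables

section GroupAction

variable {G X : Type*} [Group G] [MeasurableSpace X] [MulAction G X]

lemma map_smul_prod_eq_of_stationary [MeasurableSpace G] [MeasurableSMul₂ G X] {μ : Measure G}
    {ν : Measure X} [SFinite ν]
    (hstat : ∀ A : Set X, MeasurableSet A → ν A = ∫⁻ g, ν ((g • ·) ⁻¹' A) ∂μ) :
    (μ.prod ν).map (fun p : G × X => p.1 • p.2) = ν := by
  have hsmul : Measurable fun p : G × X => p.1 • p.2 := measurable_fst.smul measurable_snd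
  ext A hA
  rw [Measure.map_apply hsmul hA, Measure.prod_apply (hsmul hA), hstat A hA]
  rfl

lemma ae_ae_smul_of_map_smul_prod_eq [MeasurableSpace G] [MeasurableSMul₂ G X] {μ : Measure G}
    {ν : Measure X} [SFinite ν] (hmap : (μ.prod ν).map (fun p : G × X => p.1 • p.2) = ν)
    {p : X → Prop} (hp : ∀ᵐ x ∂ν, p x) : ∀ᵐ g ∂μ, ∀ᵐ x ∂ν, p (g • x) :=
  Measure.ae_ae_of_ae_prod <| ae_of_ae_map (f := fun p : G × X => p.1 • p.2)
    (measurable_fst.smul measurable_snd).aemeasurable (by rwa [hmap])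

lemma infoFun_sub_infoFun_ae_eq [MeasurableConstSMul G X] {ν ξ : Measure X} [SigmaFinite ν]
    [SigmaFinite ξ] (hac : ν ≪ ξ) {g : G} (hg : ξ.map (g⁻¹ • ·) ≪ ξ)
    (hg' : ξ ≪ ξ.map (g⁻¹ • ·)) (hpos : ∀ᵐ x ∂ν, ν.rnDeriv ξ (g • x) ≠ 0) :
    ∀ᵐ x ∂ν, infoFun ν g x - infoFun ξ g x =
      Real.log (ν.rnDeriv ξ (g • x)).toReal - Real.log (ν.rnDeriv ξ x).toReal := by
  simpa [infoFun] using
    log_rnDeriv_map_ae_eq (MeasurableEquiv.smul g⁻¹) hac hg hg' (by simpa using hpos)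

end GroupAction

theorem integral_infoFun_eq_of_absolutelyContinuous_general
    {G : Type*} [Group G] [MeasurableSpace G]
    {X : Type*} [MeasurableSpace X] [MulAction G X]
    (hsmul : Measurable fun p : G × X => p.1 • p.2)
    (μ : Measure G) [IsProbabilityMeasure μ]
    (ν : Measure X) [IsProbabilityMeasure ν]
    (hstat : ∀ A : Set X, MeasurableSet A → ν A = ∫⁻ g, ν ((g • ·) ⁻¹' A) ∂μ)
    (ξ : Measure X) [SigmaFinite ξ]
    (hns : ∀ g : G, Measure.map (g • ·) ξ ≪ ξ ∧ ξ ≪ Measure.map (g • ·) ξ)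
    (hac : ν ≪ ξ)
    (hIν : Integrable (fun p : G × X => infoFun ν p.1 p.2) (μ.prod ν))
    (hIξ : Integrable (fun p : G × X => infoFun ξ p.1 p.2) (μ.prod ν)) :
    ∫ g, ∫ x, infoFun ν g x ∂ν ∂μ = ∫ g, ∫ x, infoFun ξ g x ∂ν ∂μ := by
  have : MeasurableSMul₂ G X := ⟨hsmul⟩
  have hmap := map_smul_prod_eq_of_stationary hstat
  set φ : X → ℝ := fun x => Real.log (ν.rnDeriv ξ x).toReal
  have hφ : Measurable φ := (Measure.measurable_rnDeriv ν ξ).ennreal_toReal.log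
  have hcob : ∀ᵐ g ∂μ, ∀ᵐ x ∂ν, infoFun ν g x - infoFun ξ g x = φ (g • x) - φ x := by
    filter_upwards [ae_ae_smul_of_map_smul_prod_eq hmap (Measure.rnDeriv_pos hac)] with g hg
    exact infoFun_sub_infoFun_ae_eq hac (hns g⁻¹).1 (hns g⁻¹).2 (hg.mono fun x hx => hx.ne')
  have hD : Integrable (fun p : G × X => φ (p.1 • p.2) - φ p.2) (μ.prod ν) :=
    (hIν.sub hIξ).of_ae_ae_eq_prod
      ((hφ.comp hsmul).sub (hφ.comp measurable_snd)).aestronglyMeasurable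
      (hcob.mono fun g hg => hg.mono fun x hx => hx.symm)
  rw [← sub_eq_zero, ← integral_sub hIν.integral_prod_left hIξ.integral_prod_left]
  calc ∫ g, (∫ x, infoFun ν g x ∂ν - ∫ x, infoFun ξ g x ∂ν) ∂μ
      = ∫ g, ∫ x, (φ (g • x) - φ x) ∂ν ∂μ := by
        refine integral_congr_ae ?_
        filter_upwards [hcob, hIν.prod_right_ae, hIξ.prod_right_ae] with g hg hνg hξg
        rw [← integral_sub hνg hξg]
        exact integral_congr_ae hg
    _ = ∫ p, (φ (p.1 • p.2) - φ p.2) ∂(μ.prod ν) := (integral_prod _ hD).symm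
    _ = 0 := integral_comp_sub_comp_eq_zero hsmul measurable_snd
        (by rw [hmap, Measure.map_snd_prod, measure_univ, one_smul]) hφ hD

/-- If `ν` is a `μ`-stationary probability measure, `ξ` a non-singular σ-finite measure
with `ν ≪ ξ`, and both information functions `I_ν`, `I_ξ` are integrable with respect to
`μ ⊗ ν`, then their averaged integrals agree. -/
theorem integral_infoFun_eq_of_absolutelyContinuous
    {G : Type*} [Group G] [TopologicalSpace G] [IsTopologicalGroup G]
    [LocallyCompactSpace G] [SecondCountableTopology G]
    [MeasurableSpace G] [BorelSpace G]
    {X : Type*} [MeasurableSpace X] [StandardBorelSpace X] [MulAction G X]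
    (hsmul : Measurable fun p : G × X => p.1 • p.2)
    (μ : Measure G) [IsProbabilityMeasure μ] (hμ : Admissible μ)
    (ν : Measure X) [IsProbabilityMeasure ν]
    (hstat : ∀ A : Set X, MeasurableSet A → ν A = ∫⁻ g, ν ((g • ·) ⁻¹' A) ∂μ)
    (ξ : Measure X) [SigmaFinite ξ]
    (hns : ∀ g : G, Measure.map (g • ·) ξ ≪ ξ ∧ ξ ≪ Measure.map (g • ·) ξ)
    (hac : ν ≪ ξ)
    (hIν : Integrable (fun p : G × X => infoFun ν p.1 p.2) (μ.prod ν))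
    (hIξ : Integrable (fun p : G × X => infoFun ξ p.1 p.2) (μ.prod ν)) :
    ∫ g, ∫ x, infoFun ν g x ∂ν ∂μ = ∫ g, ∫ x, infoFun ξ g x ∂ν ∂μ :=
  integral_infoFun_eq_of_absolutelyContinuous_general hsmul μ ν hstat ξ hns hac hIν hIξ
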